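/- arXiv:0906.4286 — 2 statements merged into one kernel-verified Lean document; each statement's English description precedes it below -/
import Mathlib

section
/- Let n ≥ 1 and let θ₀, ..., θₙ be positive reals with θ := (θ₀⋯θₙ)^{1/(n+1)} ≤ 1. Suppose for some index m with 1 ≤ m ≤ n and some real k ≥ 1 we have θᵢ ≤ k for all 0 ≤ i ≤ m−1 and θᵢ ≥ k⁻¹ for all m ≤ i ≤ n. Then Θ := max over 1 ≤ r ≤ n of (θ₀⋯θ_{r−1})/θʳ satisfies Θ ≤ k^{n−1} · max{ θ₀/(θ₀⋯θₙ), 1/θₙ }. -/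
/-!
The geometric mean `A = θ` satisfies `A ^ (n + 1) = θ₀⋯θₙ` and `A ≤ 1`, so dividing by
`A ^ r` is at most dividing by `A ^ j` for any `j ≥ r`. For `r ≤ m` take `j = n + 1`: then
`(θ₀⋯θ_{r-1}) / A ^ r ≤ θ₀ k^{r-1} / (θ₀⋯θₙ)`. For `r > m` take `j = n`: then the quotient is at
most `A / (θ_r⋯θₙ) ≤ 1 / (θ_r⋯θₙ) ≤ k^{n-r} / θₙ`, since every `θ_i` with `m ≤ i` is at least `k⁻¹`.
-/

open Finset

theorem rpow_one_div_succ_pow {P : ℝ} (hP : 0 ≤ P) (n : ℕ) :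
    (P ^ ((1 : ℝ) / (n + 1))) ^ (n + 1) = P := by
  have h := Real.rpow_inv_natCast_pow hP n.succ_ne_zero
  push_cast at h
  rwa [one_div]

theorem prod_range_succ_le_mul_pow {θ : ℕ → ℝ} {k : ℝ} {s : ℕ} (hθ0 : 0 ≤ θ 0)
    (hnonneg : ∀ i < s, 0 ≤ θ (i + 1)) (hle : ∀ i < s, θ (i + 1) ≤ k) :
    ∏ i ∈ range (s + 1), θ i ≤ θ 0 * k ^ s := by
  rw [prod_range_succ', mul_comm]
  gcongr
  calc ∏ i ∈ range s, θ (i + 1)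
      ≤ ∏ _i ∈ range s, k :=
        prod_le_prod (fun i hi => hnonneg i (mem_range.1 hi)) fun i hi => hle i (mem_range.1 hi)
    _ = k ^ s := by rw [prod_const, card_range]

theorem pow_mul_le_prod_Ico {θ : ℕ → ℝ} {c : ℝ} {r n : ℕ} (hrn : r ≤ n) (hc : 0 ≤ c)
    (hθn : 0 ≤ θ n) (hle : ∀ i ∈ Ico r n, c ≤ θ i) :
    c ^ (n - r) * θ n ≤ ∏ i ∈ Ico r (n + 1), θ i := by
  rw [prod_Ico_succ_top hrn]
  gcongr
  calc c ^ (n - r) = ∏ _i ∈ Ico r n, c := by rw [prod_const, Nat.card_Ico]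
    _ ≤ ∏ i ∈ Ico r n, θ i := prod_le_prod (fun _ _ => hc) hle

section GeometricMean

variable {n : ℕ} {θ : ℕ → ℝ} {A : ℝ}

theorem prod_range_div_pow_le_div_prod_range (hpos : ∀ i ≤ n, 0 < θ i) (hA0 : 0 < A)
    (hA1 : A ≤ 1) (hAP : A ^ (n + 1) = ∏ i ∈ range (n + 1), θ i) {r : ℕ} (hr : r ≤ n + 1) :
    (∏ i ∈ range r, θ i) / A ^ r ≤ (∏ i ∈ range r, θ i) / ∏ i ∈ range (n + 1), θ i := by
  have hX : 0 ≤ ∏ i ∈ range r, θ i :=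
    prod_nonneg fun i hi => (hpos i (by have := mem_range.1 hi; omega)).le
  rw [← hAP]
  exact div_le_div_of_nonneg_left hX (by positivity) (pow_le_pow_of_le_one hA0.le hA1 hr)

theorem prod_range_div_pow_le_one_div_prod_Ico (hpos : ∀ i ≤ n, 0 < θ i) (hA0 : 0 < A)
    (hA1 : A ≤ 1) (hAP : A ^ (n + 1) = ∏ i ∈ range (n + 1), θ i) {r : ℕ} (hr : r ≤ n) :
    (∏ i ∈ range r, θ i) / A ^ r ≤ 1 / ∏ i ∈ Ico r (n + 1), θ i := by
  have hX : 0 < ∏ i ∈ range r, θ i :=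
    prod_pos fun i hi => hpos i (by have := mem_range.1 hi; omega)
  have hT : 0 < ∏ i ∈ Ico r (n + 1), θ i :=
    prod_pos fun i hi => hpos i (by have := mem_Ico.1 hi; omega)
  have hsplit : A ^ n * A = (∏ i ∈ range r, θ i) * ∏ i ∈ Ico r (n + 1), θ i := by
    rw [← pow_succ, hAP, prod_range_mul_prod_Ico _ (by omega)]
  calc (∏ i ∈ range r, θ i) / A ^ r
      ≤ (∏ i ∈ range r, θ i) / A ^ n :=
        div_le_div_of_nonneg_left hX.le (by positivity) (pow_le_pow_of_le_one hA0.le hA1 hr)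
    _ = A / ∏ i ∈ Ico r (n + 1), θ i := by
        rw [div_eq_div_iff (by positivity) hT.ne', mul_comm A, hsplit]
    _ ≤ 1 / ∏ i ∈ Ico r (n + 1), θ i := by gcongr

end GeometricMean

theorem stmt_0_general (n : ℕ) (θ : ℕ → ℝ) (hpos : ∀ i ≤ n, 0 < θ i)
    (hθ : (∏ i ∈ Finset.range (n + 1), θ i) ^ ((1 : ℝ) / (n + 1)) ≤ 1)
    (m : ℕ) (k : ℝ) (hk : 1 ≤ k)
    (hsmall : ∀ i < m, θ i ≤ k)
    (hbig : ∀ i, m ≤ i → i ≤ n → k⁻¹ ≤ θ i) :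
    ∀ r, 1 ≤ r → r ≤ n →
      (∏ i ∈ Finset.range r, θ i) /
          ((∏ i ∈ Finset.range (n + 1), θ i) ^ ((1 : ℝ) / (n + 1))) ^ r ≤
        k ^ (n - 1) *
          max (θ 0 / ∏ i ∈ Finset.range (n + 1), θ i) (1 / θ n) := by
  intro r hr1 hrn
  have hP : 0 < ∏ i ∈ range (n + 1), θ i :=
    prod_pos fun i hi => hpos i (Nat.lt_succ_iff.1 (mem_range.1 hi))
  have hA0 : 0 < (∏ i ∈ range (n + 1), θ i) ^ ((1 : ℝ) / (n + 1)) := by positivity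
  have hAP := rpow_one_div_succ_pow hP.le n
  have hθn := hpos n le_rfl
  rcases le_or_gt r m with hrm | hmr
  · obtain ⟨s, rfl⟩ : ∃ s, r = s + 1 := ⟨r - 1, by omega⟩
    calc _ ≤ (∏ i ∈ range (s + 1), θ i) / ∏ i ∈ range (n + 1), θ i :=
          prod_range_div_pow_le_div_prod_range hpos hA0 hθ hAP (by omega)
      _ ≤ θ 0 * k ^ s / ∏ i ∈ range (n + 1), θ i := by
          gcongr
          exact prod_range_succ_le_mul_pow (hpos 0 (by omega)).le
            (fun i hi => (hpos _ (by omega)).le) fun i hi => hsmall _ (by omega)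
      _ ≤ θ 0 * k ^ (n - 1) / ∏ i ∈ range (n + 1), θ i := by
          gcongr
          exacts [(hpos 0 (by omega)).le, by omega]
      _ = k ^ (n - 1) * (θ 0 / ∏ i ∈ range (n + 1), θ i) := by ring
      _ ≤ _ := by gcongr; exact le_max_left _ _
  · calc _ ≤ 1 / ∏ i ∈ Ico r (n + 1), θ i :=
          prod_range_div_pow_le_one_div_prod_Ico hpos hA0 hθ hAP hrn
      _ ≤ 1 / (k⁻¹ ^ (n - r) * θ n) := by
          gcongr
          exact pow_mul_le_prod_Ico hrn (inv_nonneg.2 (zero_le_one.trans hk)) hθn.le fun i hi =>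
            hbig i (by have := mem_Ico.1 hi; omega) (by have := mem_Ico.1 hi; omega)
      _ = k ^ (n - r) / θ n := by rw [inv_pow, one_div, mul_inv, inv_inv, div_eq_mul_inv]
      _ ≤ k ^ (n - 1) / θ n := by gcongr
      _ = k ^ (n - 1) * (1 / θ n) := by ring
      _ ≤ _ := by gcongr; exact le_max_right _ _

/-- bound on Θ := max_{1≤r≤n} (θ₀⋯θ_{r−1})/θʳ under the split
smallness/largeness conditions on the θᵢ. -/
theorem stmt_0 (n : ℕ) (hn : 1 ≤ n) (θ : ℕ → ℝ) (hpos : ∀ i ≤ n, 0 < θ i)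
    (hθ : (∏ i ∈ Finset.range (n + 1), θ i) ^ ((1 : ℝ) / (n + 1)) ≤ 1)
    (m : ℕ) (hm1 : 1 ≤ m) (hm2 : m ≤ n) (k : ℝ) (hk : 1 ≤ k)
    (hsmall : ∀ i < m, θ i ≤ k)
    (hbig : ∀ i, m ≤ i → i ≤ n → k⁻¹ ≤ θ i) :
    ∀ r, 1 ≤ r → r ≤ n →
      (∏ i ∈ Finset.range r, θ i) /
          ((∏ i ∈ Finset.range (n + 1), θ i) ^ ((1 : ℝ) / (n + 1))) ^ r ≤
        k ^ (n - 1) *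
          max (θ 0 / ∏ i ∈ Finset.range (n + 1), θ i) (1 / θ n) :=
  stmt_0_general n θ hpos hθ m k hk hsmall hbig
end

section
/- Let P₀,…,Pₙ ∈ ℝ[X] be polynomials of degree at most n with coefficient matrix A = (a_{i,j}) (where Pⱼ(X) = Σᵢ a_{i,j} Xⁱ). Then for any x ∈ ℝ, det( (P_j^{(i)}(x))_{0≤i,j≤n} ) = det(A) · ∏_{i=0}^n i!. -/
/-!
The map `p ↦ (p^{(i)}(x))ᵢ` is linear, so the derivative matrix of `P₀, …, Pₙ` factors as the
derivative matrix of the monomials `1, X, …, Xⁿ` times the coefficient matrix `A`. The former is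
upper triangular, since `(Xᵏ)^{(i)} = 0` for `k < i`, with diagonal entries `(Xⁱ)^{(i)} = i!`.
-/

open Polynomial Nat

namespace Polynomial

variable {R : Type*} [CommRing R] {m : ℕ}

noncomputable def iterateDerivativeEvalMatrix (P : Fin m → R[X]) (x : R) :
    Matrix (Fin m) (Fin m) R :=
  Matrix.of fun i j => (derivative^[i] (P j)).eval x

def coeffMatrix (P : Fin m → R[X]) : Matrix (Fin m) (Fin m) R :=
  Matrix.of fun i j => (P j).coeff i

theorem iterate_derivative_eval_eq_sum_coeff (p : R[X]) (hp : p.natDegree < m) (i : ℕ) (x : R) :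
    (derivative^[i] p).eval x =
      ∑ k : Fin m, (derivative^[i] (X ^ (k : ℕ) : R[X])).eval x * p.coeff k := by
  conv_lhs => rw [p.as_sum_range_C_mul_X_pow' hp]
  rw [iterate_derivative_sum, eval_finsetSum, ← Fin.sum_univ_eq_sum_range]
  refine Finset.sum_congr rfl fun k _ => ?_
  rw [iterate_derivative_C_mul, eval_mul, eval_C, mul_comm]

theorem iterateDerivativeEvalMatrix_eq_mul_coeffMatrix (P : Fin m → R[X])
    (hP : ∀ j, (P j).natDegree < m) (x : R) :
    iterateDerivativeEvalMatrix P x =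
      iterateDerivativeEvalMatrix (fun k => X ^ (k : ℕ)) x * coeffMatrix P := by
  ext i j
  exact iterate_derivative_eval_eq_sum_coeff (P j) (hP j) i x

theorem iterate_derivative_X_pow_eval_of_lt {k i : ℕ} (h : k < i) (x : R) :
    (derivative^[i] (X ^ k : R[X])).eval x = 0 := by
  simp [iterate_derivative_X_pow_eq_smul, Nat.descFactorial_eq_zero_iff_lt.2 h]

theorem iterate_derivative_X_pow_self_eval (i : ℕ) (x : R) :
    (derivative^[i] (X ^ i : R[X])).eval x = i ! := by
  simp [iterate_derivative_X_pow_eq_smul, Nat.descFactorial_self]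

theorem isUpperTriangular_iterateDerivativeEvalMatrix_X_pow (x : R) :
    (iterateDerivativeEvalMatrix (fun k : Fin m => (X ^ (k : ℕ) : R[X])) x).IsUpperTriangular :=
  fun _ _ hki => iterate_derivative_X_pow_eval_of_lt (Fin.lt_def.1 hki) x

theorem det_iterateDerivativeEvalMatrix_X_pow (x : R) :
    (iterateDerivativeEvalMatrix (fun k : Fin m => (X ^ (k : ℕ) : R[X])) x).det =
      ∏ i ∈ Finset.range m, (i ! : R) := by
  rw [Matrix.det_of_isUpperTriangular (isUpperTriangular_iterateDerivativeEvalMatrix_X_pow x),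
    ← Fin.prod_univ_eq_prod_range]
  exact Finset.prod_congr rfl fun i _ => iterate_derivative_X_pow_self_eval i x

end Polynomial

/-- for polynomials P₀,…,Pₙ of degree ≤ n with coefficient matrix
A = (a_{i,j}), a_{i,j} = coeff i of Pⱼ, the determinant of the matrix of
derivatives (P_j^{(i)}(x)) equals det A · ∏_{i=0}^n i!, for every x. -/
theorem stmt_6 (n : ℕ) (P : Fin (n + 1) → Polynomial ℝ)
    (hdeg : ∀ j, (P j).natDegree ≤ n) (x : ℝ) :
    Matrix.det (Matrix.of fun i j : Fin (n + 1) =>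
        (Polynomial.derivative^[(i : ℕ)] (P j)).eval x) =
      Matrix.det (Matrix.of fun i j : Fin (n + 1) => (P j).coeff (i : ℕ)) *
        ∏ i ∈ Finset.range (n + 1), (Nat.factorial i : ℝ) := by
  have hP : ∀ j, (P j).natDegree < n + 1 := fun j => Nat.lt_succ_of_le (hdeg j)
  change (iterateDerivativeEvalMatrix P x).det = (coeffMatrix P).det * _
  rw [iterateDerivativeEvalMatrix_eq_mul_coeffMatrix P hP, Matrix.det_mul,
    det_iterateDerivativeEvalMatrix_X_pow, mul_comm]
end
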